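/- arXiv:1602.08924 — 3 statements merged into one kernel-verified Lean document; each statement's English description precedes it below -/
import Mathlib

section
/- Let Q be any set of prime numbers. Every positive integer m admits a unique decomposition m = q·r² where q, r are positive integers such that every prime dividing r lies outside Q, and every prime p with p² ∣ q lies in Q. -/
open Finset
open scoped Classical

private lemma factorization_prod_pow_aux (S : Finset ℕ) (hS : ∀ p ∈ S, Nat.Prime p)
    (f : ℕ → ℕ) (p : ℕ) :
    (∏ q ∈ S, q ^ f q).factorization p = if p ∈ S then f p else 0 := by
  rw [Nat.factorization_prod (fun q hq => pow_ne_zero _ (hS q hq).pos.ne')]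
  rw [Finsupp.finset_sum_apply]
  rw [Finset.sum_congr rfl (fun q hq => by
    rw [(hS q hq).factorization_pow, Finsupp.single_apply])]
  exact Finset.sum_ite_eq' S p f

private lemma r_factorization (Q : Set ℕ) (hQ : ∀ p ∈ Q, Nat.Prime p)
    (m : ℕ) (hm : 0 < m) (q r : ℕ) (hq : 0 < q) (hr : 0 < r)
    (hmeq : m = q * r ^ 2)
    (h1 : ∀ p : ℕ, p.Prime → p ∣ r → p ∉ Q)
    (h2 : ∀ p : ℕ, p.Prime → p ^ 2 ∣ q → p ∈ Q) (p : ℕ) :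
    r.factorization p = if p ∈ Q then 0 else m.factorization p / 2 := by
  by_cases hp : p.Prime
  · by_cases hpQ : p ∈ Q
    · rw [if_pos hpQ]
      by_contra h
      have hdvd : p ∣ r := (hp.dvd_iff_one_le_factorization hr.ne').2 (by omega)
      exact h1 p hp hdvd hpQ
    · rw [if_neg hpQ]
      have hqle : q.factorization p ≤ 1 := by
        by_contra h
        exact hpQ (h2 p hp ((hp.pow_dvd_iff_le_factorization hq.ne').2 (by omega)))
      have hmf : m.factorization p = q.factorization p + 2 * r.factorization p := by
        rw [hmeq, Nat.factorization_mul hq.ne' (pow_ne_zero _ hr.ne'),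
          Nat.factorization_pow]
        simp [mul_comm]
      omega
  · rw [Nat.factorization_eq_zero_of_not_prime r hp,
      Nat.factorization_eq_zero_of_not_prime m hp]
    simp

theorem unique_Q_decomposition (Q : Set ℕ) (hQ : ∀ p ∈ Q, Nat.Prime p)
    (m : ℕ) (hm : 0 < m) :
    ∃! qr : ℕ × ℕ, 0 < qr.1 ∧ 0 < qr.2 ∧ m = qr.1 * qr.2 ^ 2 ∧
      (∀ p : ℕ, p.Prime → p ∣ qr.2 → p ∉ Q) ∧
      (∀ p : ℕ, p.Prime → p ^ 2 ∣ qr.1 → p ∈ Q) := by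
  classical
  set S : Finset ℕ := m.primeFactors.filter (fun p => p ∉ Q) with hS
  have hSprime : ∀ p ∈ S, Nat.Prime p := fun p hp =>
    (Nat.mem_primeFactors.1 (Finset.mem_filter.1 hp).1).1
  set r0 : ℕ := ∏ p ∈ S, p ^ (m.factorization p / 2) with hr0
  have hr0fact : ∀ p, r0.factorization p =
      if p ∈ S then m.factorization p / 2 else 0 :=
    factorization_prod_pow_aux S hSprime _
  have hr0pos : 0 < r0 :=
    Finset.prod_pos (fun p hp => pow_pos (hSprime p hp).pos _)
  have hdvd : r0 ^ 2 ∣ m := by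
    rw [← Nat.factorization_le_iff_dvd (pow_ne_zero _ hr0pos.ne') hm.ne']
    intro p
    rw [Nat.factorization_pow, Finsupp.smul_apply, hr0fact p]
    by_cases hp : p ∈ S
    · rw [if_pos hp]; simp only [smul_eq_mul]; omega
    · simp [hp]
  set q0 : ℕ := m / r0 ^ 2 with hq0
  have hmeq : m = q0 * r0 ^ 2 := (Nat.div_mul_cancel hdvd).symm
  have hq0pos : 0 < q0 := by
    rcases Nat.eq_zero_or_pos q0 with h | h
    · rw [h, zero_mul] at hmeq; omega
    · exact h
  have hq0fact : ∀ p, q0.factorization p =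
      m.factorization p - (r0 ^ 2).factorization p := by
    intro p
    rw [hq0, Nat.factorization_div hdvd]
    simp
  have hcond1 : ∀ p : ℕ, p.Prime → p ∣ r0 → p ∉ Q := by
    intro p hp hpd hpQ
    have h1 : 1 ≤ r0.factorization p := (hp.dvd_iff_one_le_factorization hr0pos.ne').1 hpd
    rw [hr0fact p] at h1
    by_cases hpS : p ∈ S
    · exact (Finset.mem_filter.1 hpS).2 hpQ
    · rw [if_neg hpS] at h1; omega
  have hcond2 : ∀ p : ℕ, p.Prime → p ^ 2 ∣ q0 → p ∈ Q := by
    intro p hp hpd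
    by_contra hpQ
    have h2 : 2 ≤ q0.factorization p := (hp.pow_dvd_iff_le_factorization hq0pos.ne').1 hpd
    rw [hq0fact p, Nat.factorization_pow, Finsupp.smul_apply, hr0fact p] at h2
    by_cases hpm : p ∈ m.primeFactors
    · have hpS : p ∈ S := Finset.mem_filter.2 ⟨hpm, hpQ⟩
      rw [if_pos hpS] at h2
      simp only [smul_eq_mul] at h2
      omega
    · have : m.factorization p = 0 := by
        rw [← Nat.support_factorization] at hpm
        exact Finsupp.notMem_support_iff.1 hpm
      omega
  refine ⟨(q0, r0), ⟨hq0pos, hr0pos, hmeq, hcond1, hcond2⟩, ?_⟩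
  rintro ⟨q, r⟩ ⟨hq, hr, hmeq', h1, h2⟩
  have hrfact : ∀ p, r.factorization p = r0.factorization p := by
    intro p
    rw [r_factorization Q hQ m hm q r hq hr hmeq' h1 h2 p,
      r_factorization Q hQ m hm q0 r0 hq0pos hr0pos hmeq hcond1 hcond2 p]
  have hrr : r = r0 := by
    apply Nat.factorization_inj hr.ne' hr0pos.ne'
    ext p
    exact hrfact p
  have hqq : q = q0 := by
    have h : q * r ^ 2 = q0 * r0 ^ 2 := by rw [← hmeq', ← hmeq]
    rw [hrr] at h
    exact Nat.eq_of_mul_eq_mul_right (pow_pos hr0pos 2) h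
  simp [hqq, hrr]
end

section
/- Let V be a complex vector space, U and W linear endomorphisms of V with W² = id, and suppose (U∘W)∘(U∘W) = μ·(U∘W) + 2μ²·id for some nonzero complex number μ. If f ∈ V is nonzero and U(f) = c·f for a scalar c, then c ≠ 0 and U(W(f)) = μ·f + (2μ²/c)·W(f). -/
theorem niwa_relation_eigen (V : Type*) [AddCommGroup V] [Module ℂ V]
    (U W : V →ₗ[ℂ] V) (hW : W ∘ₗ W = LinearMap.id) (μ : ℂ) (hμ : μ ≠ 0)
    (hrel : (U ∘ₗ W) ∘ₗ (U ∘ₗ W) = μ • (U ∘ₗ W) + (2 * μ ^ 2) • LinearMap.id)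
    (f : V) (hf : f ≠ 0) (c : ℂ) (hc : U f = c • f) :
    c ≠ 0 ∧ U (W f) = μ • f + (2 * μ ^ 2 / c) • W f := by
  have hWW : ∀ v, W (W v) = v := fun v => by
    have := LinearMap.ext_iff.mp hW v
    simpa using this
  have hμ2 : 2 * μ ^ 2 ≠ 0 := by
    simp [hμ]
  -- relation applied to W f
  have eq1 : c • U (W f) = (μ * c) • f + (2 * μ ^ 2) • W f := by
    have := LinearMap.ext_iff.mp hrel (W f)
    simp only [LinearMap.comp_apply, LinearMap.add_apply, LinearMap.smul_apply,
      LinearMap.id_apply, hWW, hc, map_smul, smul_smul] at this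
    exact this
  have hc0 : c ≠ 0 := by
    intro h
    rw [h] at eq1
    simp only [zero_smul, mul_zero] at eq1
    have : (2 * μ ^ 2) • W f = 0 := by
      rw [← zero_add ((2 * μ ^ 2) • W f), ← eq1]
    have hWf0 : W f = 0 := by
      rcases smul_eq_zero.mp this with h' | h'
      · exact absurd h' hμ2
      · exact h'
    apply hf
    have := hWW f
    rw [hWf0, map_zero] at this
    exact this.symm
  refine ⟨hc0, ?_⟩
  have := congrArg (fun v => c⁻¹ • v) eq1
  simp only [smul_add, smul_smul, inv_mul_cancel₀ hc0, one_smul] at this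
  rw [this]
  congr 1
  · congr 1
    field_simp
  · congr 1
    field_simp
end

section
/- Let V be a complex vector space, U, W linear endomorphisms with W² = id and (U∘W)² = μ·(U∘W) + 2μ²·id, μ ≠ 0. Suppose f ≠ 0, U(f) = c·f, and c² ≠ 2μ². Set α = c·μ/(2μ² − c²) and H = W(f) + α·f. Then U(H) = (2μ²/c)·H. -/
/-! Applying the quadratic relation for `T = U ∘ W` to `W f`, and using `T (W f) = U f = c f`,
gives `c • U (W f) = (a c) • f + b • W f`. So `U` preserves the plane spanned by `f` and `W f`,
and for `c ≠ 0` the vector `W f + α f` with `α (b - c²) = a c` is an eigenvector with eigenvalue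
`b / c`. Finally `c = 0` is impossible, since the relation would force `b • W f = 0`. -/

section InvolutionRelation

variable {K V : Type*} [Field K] [AddCommGroup V] [Module K V] {U W : V →ₗ[K] V} {a b c : K}
  {f : V}

theorem apply_apply_of_comp_self_eq_id (hW : W ∘ₗ W = LinearMap.id) (v : V) : W (W v) = v :=
  LinearMap.congr_fun hW v

theorem smul_apply_apply_of_comp_sq_eq (hW : W ∘ₗ W = LinearMap.id)
    (hrel : (U ∘ₗ W) ∘ₗ (U ∘ₗ W) = a • (U ∘ₗ W) + b • LinearMap.id) (hc : U f = c • f) :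
    c • U (W f) = (a * c) • f + b • W f := by
  have h := LinearMap.congr_fun hrel (W f)
  simp only [LinearMap.comp_apply, LinearMap.add_apply, LinearMap.smul_apply,
    LinearMap.id_apply, apply_apply_of_comp_self_eq_id hW, hc, map_smul] at h
  rw [h, smul_smul]

theorem ne_zero_of_comp_sq_eq (hW : W ∘ₗ W = LinearMap.id)
    (hrel : (U ∘ₗ W) ∘ₗ (U ∘ₗ W) = a • (U ∘ₗ W) + b • LinearMap.id) (hb : b ≠ 0) (hf : f ≠ 0)
    (hc : U f = c • f) : c ≠ 0 := by
  rintro rfl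
  have h := smul_apply_apply_of_comp_sq_eq hW hrel hc
  simp only [zero_smul, mul_zero, zero_add] at h
  have hWf : W f = 0 := (smul_eq_zero.mp h.symm).resolve_left hb
  exact hf (by rw [← apply_apply_of_comp_self_eq_id hW f, hWf, map_zero])

theorem apply_add_smul_eq_of_comp_sq_eq (hW : W ∘ₗ W = LinearMap.id)
    (hrel : (U ∘ₗ W) ∘ₗ (U ∘ₗ W) = a • (U ∘ₗ W) + b • LinearMap.id) (hc : U f = c • f)
    (hc0 : c ≠ 0) {α : K} (hα : α * (b - c ^ 2) = a * c) :
    U (W f + α • f) = (b / c) • (W f + α • f) := by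
  apply smul_right_injective V hc0
  have hUWf := smul_apply_apply_of_comp_sq_eq hW hrel hc
  simp only [map_add, map_smul, hc, smul_add, hUWf, smul_smul]
  match_scalars
  · field_simp
    linear_combination -hα
  · field_simp

end InvolutionRelation

theorem niwa_relation_eigenvector (V : Type*) [AddCommGroup V] [Module ℂ V]
    (U W : V →ₗ[ℂ] V) (hW : W ∘ₗ W = LinearMap.id) (μ : ℂ) (hμ : μ ≠ 0)
    (hrel : (U ∘ₗ W) ∘ₗ (U ∘ₗ W) = μ • (U ∘ₗ W) + (2 * μ ^ 2) • LinearMap.id)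
    (f : V) (hf : f ≠ 0) (c : ℂ) (hc : U f = c • f) (hc2 : c ^ 2 ≠ 2 * μ ^ 2) :
    U (W f + (c * μ / (2 * μ ^ 2 - c ^ 2)) • f) =
      (2 * μ ^ 2 / c) • (W f + (c * μ / (2 * μ ^ 2 - c ^ 2)) • f) := by
  have hc0 : c ≠ 0 := ne_zero_of_comp_sq_eq hW hrel (by simp [hμ]) hf hc
  refine apply_add_smul_eq_of_comp_sq_eq hW hrel hc hc0 ?_
  rw [div_mul_cancel₀ _ (sub_ne_zero.mpr hc2.symm), mul_comm]
end
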